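/- arXiv:math/9911268 — 2 statements merged into one kernel-verified Lean document; each statement's English description precedes it below -/
import Mathlib

section
/- Every 1-extendable connected bipartite graph with more than two vertices is 2-connected. -/
open SimpleGraph

universe u v

variable {V : Type u} {W : Type v}

/-- `(A, B)` is a bipartition of the simple graph `G`. -/
def IsBipartition (G : SimpleGraph V) (A B : Set V) : Prop :=
  Disjoint A B ∧ A ∪ B = Set.univ ∧
    ∀ ⦃u v⦄, G.Adj u v → ((u ∈ A ∧ v ∈ B) ∨ (u ∈ B ∧ v ∈ A))

/-- `G` is `k`-extendable: every matching with at most `k` edges extends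
to a perfect matching. -/
def KExtendable (G : SimpleGraph V) (k : ℕ) : Prop :=
  ∀ M : G.Subgraph, M.IsMatching → M.edgeSet.ncard ≤ k →
    ∃ P : G.Subgraph, M ≤ P ∧ P.IsPerfectMatching

/-- A brace is a `2`-extendable bipartite graph. -/
def IsBrace (G : SimpleGraph V) : Prop :=
  (∃ A B, IsBipartition G A B) ∧ KExtendable G 2

/-- `G` has a matching whose vertex set is exactly `S`
(i.e. the subgraph of `G` induced on `S` has a perfect matching). -/
def HasPMOn (G : SimpleGraph V) (S : Set V) : Prop :=
  ∃ M : G.Subgraph, M.IsMatching ∧ M.verts = S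

/-- An orientation of a simple graph: each edge gets exactly one direction. -/
structure GraphOrientation (G : SimpleGraph V) where
  dir : V → V → Prop
  asymm : ∀ u v, dir u v → ¬ dir v u
  adj_iff : ∀ u v, G.Adj u v ↔ (dir u v ∨ dir v u)

open scoped Classical in
/-- The number of edges of the walk `w` traversed in agreement with the
orientation `o`. -/
noncomputable def forwardCount {G : SimpleGraph V} (o : GraphOrientation G) {u v : V}
    (w : G.Walk u v) : ℕ :=
  w.darts.countP fun d => decide (o.dir d.fst d.snd)

/-- `o` is a Pfaffian orientation of `G`: every central even circuit is oddly
oriented.  (For an even circuit, being oddly oriented with respect to one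
traversal direction is equivalent to being oddly oriented with respect to the
other.) -/
def IsPfaffian (G : SimpleGraph V) (o : GraphOrientation G) : Prop :=
  ∀ (v : V) (c : G.Walk v v), c.IsCycle → Even c.length →
    HasPMOn G {x | x ∉ c.support} → Odd (forwardCount o c)

/-- The neighborhood of a vertex set: vertices outside `X` adjacent to `X`. -/
def nbdSet (G : SimpleGraph V) (X : Set V) : Set V :=
  {v | v ∉ X ∧ ∃ x ∈ X, G.Adj x v}

/-- Restriction of `G` to the vertex set `T`, kept on the same vertex type. -/
def restrictG (G : SimpleGraph V) (T : Set V) : SimpleGraph V where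
  Adj x y := G.Adj x y ∧ x ∈ T ∧ y ∈ T
  symm := ⟨fun x y ⟨h, hx, hy⟩ => ⟨h.symm, hy, hx⟩⟩
  loopless := ⟨fun x ⟨h, _, _⟩ => G.irrefl h⟩

/-- Every edge of `G` is contained in a matching with vertex set exactly `S`.
(When the edges of `G` lie within `S`, this says that the graph on `S` is
1-extendable.) -/
def OneExtendableOn (G : SimpleGraph V) (S : Set V) : Prop :=
  ∀ ⦃x y⦄, G.Adj x y → ∃ M : G.Subgraph, M.IsMatching ∧ M.verts = S ∧ M.Adj x y

/-- `G` is 1-extendable: every edge lies in a perfect matching. -/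
def OneExtendable (G : SimpleGraph V) : Prop :=
  OneExtendableOn G Set.univ

/-- `G` is `k`-connected: more than `k` vertices, and deleting fewer than
`k` vertices leaves a connected graph. -/
def KConnected (G : SimpleGraph V) [Fintype V] (k : ℕ) : Prop :=
  k < Fintype.card V ∧ ∀ S : Set V, S.ncard < k → (G.induce (Sᶜ : Set V)).Connected

/-- A walk is `M`-alternating if its edges alternately belong and do not
belong to `M`. -/
def IsAltWalk {G : SimpleGraph V} (M : G.Subgraph) {u v : V} (w : G.Walk u v) : Prop :=
  (∀ (i : ℕ) (h : i < w.edges.length), (w.edges.get ⟨i, h⟩ ∈ M.edgeSet ↔ Even i)) ∨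
  (∀ (i : ℕ) (h : i < w.edges.length), (w.edges.get ⟨i, h⟩ ∈ M.edgeSet ↔ Odd i))

/-- A path is `M`-alternating if every internal vertex (vertex of degree two
in the path) is incident with an edge of `M` lying on the path. -/
def IsMAltPath {G : SimpleGraph V} (M : G.Subgraph) {a b : V} (p : G.Walk a b) : Prop :=
  p.IsPath ∧ ∀ x ∈ p.support, x ≠ a → x ≠ b → ∃ y, M.Adj x y ∧ s(x, y) ∈ p.edges

/-- An `H`-path: a path with at least one edge, both ends in `H`, and
otherwise disjoint from `H`. -/
def IsHPath {G : SimpleGraph V} (H : G.Subgraph) {a b : V} (p : G.Walk a b) : Prop :=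
  0 < p.length ∧ a ∈ H.verts ∧ b ∈ H.verts ∧
  (∀ x ∈ p.support, x ≠ a → x ≠ b → x ∉ H.verts) ∧
  ∀ e ∈ p.edges, e ∉ H.edgeSet

/-- Neighborhood of a vertex set inside a subgraph `H`. -/
def nbdSetSub {G : SimpleGraph V} (H : G.Subgraph) (X : Set V) : Set V :=
  {v | v ∉ X ∧ ∃ x ∈ X, H.Adj x v}

/-- `M` is a perfect matching of the subgraph `H`. -/
def SubgraphPM {G₀ : SimpleGraph V} (H M : G₀.Subgraph) : Prop :=
  M ≤ H ∧ M.IsMatching ∧ M.verts = H.verts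

/-- `G` is a 4-sum of the subgraphs `G₁, G₂` of `G₀` along the central
circuit `C` with vertices `a, b, c, d` (in order):
`G₁ ∪ G₂ = G₀`, `G₁ ∩ G₂ = C`, each `Gᵢ` has a vertex not in the other, and
`G` is obtained from `G₀` by deleting some (possibly no) edges of `C`. -/
def IsFourSum (G G₀ : SimpleGraph V) (G₁ G₂ : G₀.Subgraph) (a b c d : V) : Prop :=
  ([a, b, c, d] : List V).Nodup ∧
  G₀.Adj a b ∧ G₀.Adj b c ∧ G₀.Adj c d ∧ G₀.Adj d a ∧
  HasPMOn G₀ (({a, b, c, d} : Set V)ᶜ) ∧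
  G₁ ⊔ G₂ = (⊤ : G₀.Subgraph) ∧
  (G₁ ⊓ G₂).verts = ({a, b, c, d} : Set V) ∧
  (∀ x y, (G₁ ⊓ G₂).Adj x y ↔
      s(x, y) ∈ ({s(a, b), s(b, c), s(c, d), s(d, a)} : Set (Sym2 V))) ∧
  (G₁.verts \ G₂.verts).Nonempty ∧ (G₂.verts \ G₁.verts).Nonempty ∧
  (∀ x y, G.Adj x y → G₀.Adj x y) ∧
  (∀ x y, G₀.Adj x y →
      G.Adj x y ∨ s(x, y) ∈ ({s(a, b), s(b, c), s(c, d), s(d, a)} : Set (Sym2 V)))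

/-- `G` contains `H`: some even subdivision of `H` (each edge replaced by an
internally disjoint path with an odd number of edges) is isomorphic to a
central subgraph of `G`. -/
def Contains (G : SimpleGraph V) (H : SimpleGraph W) : Prop :=
  ∃ (f : W → V) (p : ∀ u v : W, H.Adj u v → G.Walk (f u) (f v)),
    Function.Injective f ∧
    (∀ u v (h : H.Adj u v), (p u v h).IsPath ∧ Odd (p u v h).length) ∧
    (∀ u v (h : H.Adj u v), p v u h.symm = (p u v h).reverse) ∧
    (∀ u v (h : H.Adj u v) (w : W), f w ∈ (p u v h).support → w = u ∨ w = v) ∧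
    (∀ u v u' v' (h : H.Adj u v) (h' : H.Adj u' v'), s(u, v) ≠ s(u', v') →
      ∀ x, x ∈ (p u v h).support → x ∈ (p u' v' h').support →
        (x = f u ∨ x = f v) ∧ (x = f u' ∨ x = f v')) ∧
    HasPMOn G ((Set.range f ∪ {x | ∃ u v, ∃ h : H.Adj u v, x ∈ (p u v h).support})ᶜ)

/-- `K'` is obtained from `K` by a bicontraction: contracting both edges at a
vertex `u` of degree two (with distinct neighbors `a` and `b`) and deleting
parallel edges. -/
def BicontractAt (K K' : (⊤ : SimpleGraph V).Subgraph) : Prop :=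
  ∃ u a b : V, a ≠ b ∧ K.Adj u a ∧ K.Adj u b ∧
    (∀ x, K.Adj u x → x = a ∨ x = b) ∧
    K'.verts = K.verts \ {u, a} ∧
    ∀ x y, K'.Adj x y ↔ (x ∈ K.verts \ {u, a} ∧ y ∈ K.verts \ {u, a} ∧ x ≠ y ∧
      ∃ x' y', K.Adj x' y' ∧ (x' = x ∨ (x = b ∧ (x' = a ∨ x' = u))) ∧
        (y' = y ∨ (y = b ∧ (y' = a ∨ y' = u))))

/-- `G` weakly contains `H`: `G` has a central subgraph `K` from which a graph
isomorphic to `H` can be obtained by a sequence of bicontractions. -/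
def WeaklyContains (G : SimpleGraph V) (H : SimpleGraph W) : Prop :=
  ∃ K : (⊤ : SimpleGraph V).Subgraph,
    (∀ ⦃x y⦄, K.Adj x y → G.Adj x y) ∧
    HasPMOn G (K.vertsᶜ) ∧
    ∃ K' : (⊤ : SimpleGraph V).Subgraph,
      Relation.ReflTransGen BicontractAt K K' ∧ Nonempty (K'.coe ≃g H)

/-- The Heawood graph (LCF notation `[5, -5]⁷`): a 14-cycle together with the
chords `{i, i+5}` for even `i`. -/
def heawood : SimpleGraph (Fin 14) :=
  SimpleGraph.fromRel (fun i j => j = i + 1 ∨ (Even (i : ℕ) ∧ j = i + 5))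

/-- The digraph `D(G, M)` on the color class `A`, obtained from `G` by
directing every edge from `A` to `B` and contracting every edge of `M`. -/
def DGM (G : SimpleGraph V) (A : Set V) (M : G.Subgraph) : A → A → Prop :=
  fun a a' => ∃ b, M.Adj (↑a' : V) b ∧ G.Adj (↑a : V) b

/-- A digraph is strongly `k`-connected if deleting fewer than `k` vertices
leaves it strongly connected. -/
def StronglyKConnected {α : Type*} (D : α → α → Prop) (k : ℕ) : Prop :=
  ∀ S : Set α, S.ncard < k → ∀ u v : α, u ∉ S → v ∉ S →
    Relation.ReflTransGen (fun x y => D x y ∧ x ∉ S ∧ y ∉ S) u v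

/-- The edge `u₁u₂` of the graph with vertex set `S` obtained from `G₁` is
reducing: deleting both ends destroys 1-extendability. -/
def ReducingIn (G₁ : SimpleGraph V) (S : Set V) (u₁ u₂ : V) : Prop :=
  G₁.Adj u₁ u₂ ∧
    ¬ OneExtendableOn (restrictG G₁ (({u₁, u₂} : Set V)ᶜ)) (S \ {u₁, u₂})

/-- `G` (bipartite with bipartition `(A, B)`) is a 2-sum of `G₁` (with vertex
set `V₁`) and `G₂` (with vertex set `V₂`) along the edge `u₁u₂`. -/
def IsTwoSum (G : SimpleGraph V) (A B : Set V) (u₁ u₂ : V)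
    (G₁ G₂ : SimpleGraph V) (V₁ V₂ : Set V) : Prop :=
  u₁ ∈ A ∧ u₂ ∈ B ∧ G.Adj u₁ u₂ ∧
  ∃ X : Set V, X.Nonempty ∧ X ⊆ A \ {u₁} ∧ X ≠ A \ {u₁} ∧
    (nbdSet G X \ {u₂}).ncard = X.ncard ∧
    V₂ = ((X ∪ (nbdSet G X \ {u₂}))ᶜ : Set V) ∧
    V₁ = X ∪ (nbdSet G X \ {u₂}) ∪ {u₁, u₂} ∧
    (∀ x y, G₁.Adj x y ↔ ((G.Adj x y ∧ x ∈ V₁ ∧ y ∈ V₁) ∨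
      (x = u₁ ∧ y ∈ {w | w ∈ nbdSet G X \ {u₂} ∧ ¬ G.Adj u₁ w ∧ ∃ z, z ∉ V₁ ∧ G.Adj w z}) ∨
      (y = u₁ ∧ x ∈ {w | w ∈ nbdSet G X \ {u₂} ∧ ¬ G.Adj u₁ w ∧ ∃ z, z ∉ V₁ ∧ G.Adj w z}))) ∧
    (∀ x y, G₂.Adj x y ↔ ((G.Adj x y ∧ x ∈ V₂ ∧ y ∈ V₂) ∨
      (x = u₂ ∧ y ∈ {w | w ∈ (A \ X) \ {u₁} ∧ ¬ G.Adj u₂ w ∧ ∃ z, z ∉ V₂ ∧ G.Adj w z}) ∨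
      (y = u₂ ∧ x ∈ {w | w ∈ (A \ X) \ {u₁} ∧ ¬ G.Adj u₂ w ∧ ∃ z, z ∉ V₂ ∧ G.Adj w z})))

/-- A trisector: a set of four vertices whose deletion leaves at least three
connected components. -/
def IsTrisector (G : SimpleGraph V) (X : Set V) : Prop :=
  X.ncard = 4 ∧ 3 ≤ Nat.card (G.induce (Xᶜ : Set V)).ConnectedComponent

/-!
If `v` were a cut vertex, let `s` be the component of `G - v` containing a neighbour `a` of `v`,
and let `b` be a neighbour of `v` outside `s`. A perfect matching through `va` matches
`s ∪ {v}` within itself, and one through `vb` matches `s` within itself, so `|s| + 1` and `|s|`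
would both be even.
-/

namespace SimpleGraph

variable {G : SimpleGraph V}

theorem Subgraph.IsPerfectMatching.even_ncard_of_adj_mem [Finite V] {M : G.Subgraph}
    (hM : M.IsPerfectMatching) {s : Set V} (hs : ∀ x ∈ s, ∀ y, M.Adj x y → y ∈ s) :
    Even s.ncard := by
  have hmatch : (M.induce s).IsMatching := by
    intro x hx
    obtain ⟨y, hxy, huniq⟩ := hM.1 (hM.2 x)
    exact ⟨y, ⟨hx, hs x hx y hxy, hxy⟩, fun z hz => huniq z hz.2.2⟩
  have : Fintype (M.induce s).verts := Fintype.ofFinite s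
  simpa [Set.ncard_eq_toFinset_card'] using hmatch.even_card

theorem OneExtendable.exists_isPerfectMatching (h1 : OneExtendable G) {x y : V}
    (hxy : G.Adj x y) : ∃ M : G.Subgraph, M.IsPerfectMatching ∧ M.Adj x y := by
  obtain ⟨M, hM, hverts, hMxy⟩ := h1 hxy
  exact ⟨M, ⟨hM, Subgraph.isSpanning_iff.mpr hverts⟩, hMxy⟩

theorem OneExtendable.reachable_induce_compl_singleton [Finite V] (h1 : OneExtendable G)
    {v a b : V} (hva : G.Adj v a) (hvb : G.Adj v b) :
    (G.induce {v}ᶜ).Reachable ⟨a, hva.ne'⟩ ⟨b, hvb.ne'⟩ := by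
  by_contra hab
  set s : Set V := {x | ∃ hx : x ≠ v, (G.induce {v}ᶜ).Reachable ⟨a, hva.ne'⟩ ⟨x, hx⟩}
  have hclosed : ∀ x ∈ s, ∀ y, G.Adj x y → y ≠ v → y ∈ s := by
    rintro x ⟨hx, hax⟩ y hxy hy
    exact ⟨hy, hax.trans (show (G.induce {v}ᶜ).Adj ⟨x, hx⟩ ⟨y, hy⟩ from hxy).reachable⟩
  have hvs : v ∉ s := fun ⟨hv, _⟩ => hv rfl
  have hbs : b ∉ s := fun ⟨_, hab'⟩ => hab hab'
  obtain ⟨M, hM, hMva⟩ := h1.exists_isPerfectMatching hva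
  obtain ⟨M', hM', hM'vb⟩ := h1.exists_isPerfectMatching hvb
  have heven_insert : Even (insert v s).ncard := by
    refine hM.even_ncard_of_adj_mem ?_
    rintro x (rfl | hx) y hxy
    · exact (hM.1 (hM.2 x)).unique hxy hMva ▸ Or.inr ⟨hva.ne', .rfl⟩
    · by_cases hy : y = v
      · exact hy ▸ Set.mem_insert v s
      · exact Or.inr (hclosed x hx y (M.adj_sub hxy) hy)
  have heven : Even s.ncard := by
    refine hM'.even_ncard_of_adj_mem fun x hx y hxy => ?_
    by_cases hy : y = v
    · subst hy
      exact absurd ((hM'.1 (hM'.2 y)).unique hxy.symm hM'vb ▸ hx) hbs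
    · exact hclosed x hx y (M'.adj_sub hxy) hy
  rw [Set.ncard_insert_of_notMem hvs (Set.toFinite s), Nat.even_add_one] at heven_insert
  exact heven_insert heven

theorem reachable_induce_compl_singleton_of_walk {v : V}
    (hnbr : ∀ ⦃a b⦄ (hva : G.Adj v a) (hvb : G.Adj v b),
      (G.induce {v}ᶜ).Reachable ⟨a, hva.ne'⟩ ⟨b, hvb.ne'⟩) :
    ∀ {a b : V} (_ : G.Walk a b) (ha : a ≠ v) (hb : b ≠ v),
      (G.induce {v}ᶜ).Reachable ⟨a, ha⟩ ⟨b, hb⟩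
  | _, _, .nil, _, _ => .rfl
  | _, _, .cons hac .nil, ha, hb => (show (G.induce {v}ᶜ).Adj ⟨_, ha⟩ ⟨_, hb⟩ from hac).reachable
  | _, _, .cons (v := c) hac (.cons hcd p), ha, hb => by
    by_cases hc : c = v
    · subst hc
      exact (hnbr hac.symm hcd).trans
        (reachable_induce_compl_singleton_of_walk hnbr p hcd.ne' hb)
    · exact (show (G.induce {v}ᶜ).Adj ⟨_, ha⟩ ⟨c, hc⟩ from hac).reachable.trans
        (reachable_induce_compl_singleton_of_walk hnbr (.cons hcd p) hc hb)
termination_by _ _ w => w.length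

theorem Connected.induce_compl_singleton [Nontrivial V] (hconn : G.Connected) {v : V}
    (hnbr : ∀ ⦃a b⦄ (hva : G.Adj v a) (hvb : G.Adj v b),
      (G.induce {v}ᶜ).Reachable ⟨a, hva.ne'⟩ ⟨b, hvb.ne'⟩) :
    (G.induce {v}ᶜ).Connected := by
  have : Nonempty ({v}ᶜ : Set V) := let ⟨u, hu⟩ := exists_ne v; ⟨⟨u, hu⟩⟩
  exact ⟨fun ⟨a, ha⟩ ⟨b, hb⟩ =>
    reachable_induce_compl_singleton_of_walk hnbr (hconn.preconnected a b).some ha hb⟩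

end SimpleGraph

theorem oneExtendable_twoConnected_general [Fintype V] (G : SimpleGraph V)
    (hconn : G.Connected) (h1 : OneExtendable G) (hcard : 2 < Fintype.card V) :
    KConnected G 2 := by
  refine ⟨hcard, fun S hS => ?_⟩
  obtain rfl | ⟨v, rfl⟩ := (Set.ncard_le_one_iff_eq).mp (Nat.le_of_lt_succ hS)
  · rw [Set.compl_empty]
    exact (induceUnivIso G).connected_iff.mpr hconn
  · have : Nontrivial V := Fintype.one_lt_card_iff_nontrivial.mp (by omega)
    exact hconn.induce_compl_singleton fun _ _ => h1.reachable_induce_compl_singleton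

/-- Every 1-extendable connected bipartite graph with more than two vertices
is 2-connected. -/
theorem oneExtendable_twoConnected [Fintype V] (G : SimpleGraph V)
    (hbip : ∃ A B, IsBipartition G A B) (hconn : G.Connected)
    (h1 : OneExtendable G) (hcard : 2 < Fintype.card V) :
    KConnected G 2 :=
  oneExtendable_twoConnected_general G hconn h1 hcard
end

section
/- The complete bipartite graph K_{3,3} does not admit a Pfaffian orientation. -/
open SimpleGraph

universe u v

variable {V : Type u} {W : Type v}

/-! Every 4-cycle of `K₃,₃` is central, since the two vertices it misses are adjacent. Modulo 2,
the forward count of a 4-cycle `a b c d` is the number of its edges directed away from `{a, c}`,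
because reversing an edge changes its contribution by one and two edges are traversed towards
`{a, c}`. Fixing `a` and `c` on one side, each edge at `a` or `c` lies on exactly two of the three
4-cycles through `a` and `c`, so their forward counts cannot all be odd. -/

namespace GraphOrientation

variable {G : SimpleGraph V} (o : GraphOrientation G)

open scoped Classical in
noncomputable def parity (u v : V) : ZMod 2 := if o.dir u v then 1 else 0

theorem parity_add_parity_swap {u v : V} (h : G.Adj u v) : o.parity u v + o.parity v u = 1 := by
  rcases (o.adj_iff u v).mp h with huv | hvu
  · simp [parity, huv, o.asymm u v huv]
  · simp [parity, hvu, o.asymm v u hvu]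

end GraphOrientation

theorem cast_forwardCount_cons {G : SimpleGraph V} (o : GraphOrientation G) {u v w : V}
    (h : G.Adj u v) (p : G.Walk v w) :
    (forwardCount o (.cons h p) : ZMod 2) = o.parity u v + forwardCount o p := by
  simp only [forwardCount, Walk.darts_cons, List.countP_cons, GraphOrientation.parity]
  split_ifs <;> simp_all [add_comm]

section Square

variable {G : SimpleGraph V} {a b c d : V}

def SimpleGraph.Walk.square (hab : G.Adj a b) (hbc : G.Adj b c) (hcd : G.Adj c d)
    (hda : G.Adj d a) : G.Walk a a :=
  .cons hab (.cons hbc (.cons hcd (.cons hda .nil)))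

variable (hab : G.Adj a b) (hbc : G.Adj b c) (hcd : G.Adj c d) (hda : G.Adj d a)

theorem SimpleGraph.Walk.length_square : (Walk.square hab hbc hcd hda).length = 4 := rfl

theorem SimpleGraph.Walk.support_square :
    (Walk.square hab hbc hcd hda).support = [a, b, c, d, a] := rfl

theorem SimpleGraph.Walk.isCycle_square (hac : a ≠ c) (hbd : b ≠ d) :
    (Walk.square hab hbc hcd hda).IsCycle := by
  rw [Walk.square, Walk.cons_isCycle_iff]
  simp [Walk.isPath_def, hab.ne, hbc.ne, hcd.ne, hda.ne, hac, hbd, hab.ne.symm, hda.ne.symm,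
    hac.symm]

theorem cast_forwardCount_square (o : GraphOrientation G) :
    (forwardCount o (Walk.square hab hbc hcd hda) : ZMod 2) =
      (o.parity a b + o.parity c b) + (o.parity a d + o.parity c d) := by
  have hcb := o.parity_add_parity_swap hbc.symm
  have had := o.parity_add_parity_swap hda.symm
  simp only [Walk.square, cast_forwardCount_cons]
  simp only [forwardCount, Walk.darts_nil, List.countP_nil, Nat.cast_zero, add_zero]
  grind

theorem IsPfaffian.odd_forwardCount_square {o : GraphOrientation G} (hpf : IsPfaffian G o)
    (hac : a ≠ c) (hbd : b ≠ d) (hcentral : HasPMOn G ({a, b, c, d} : Set V)ᶜ) :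
    Odd (forwardCount o (Walk.square hab hbc hcd hda)) := by
  refine hpf a _ (Walk.isCycle_square hab hbc hcd hda hac hbd)
    (by rw [Walk.length_square]; decide) ?_
  convert hcentral using 2
  ext x
  simp only [Walk.support_square, List.mem_cons, List.not_mem_nil, Set.mem_ofPred_eq,
    Set.mem_compl_iff, Set.mem_insert_iff, Set.mem_singleton_iff]
  tauto

end Square

theorem GraphOrientation.not_odd_forwardCount_squares {G : SimpleGraph V}
    (o : GraphOrientation G) {a c b₁ b₂ b₃ : V} (ha₁ : G.Adj a b₁) (ha₂ : G.Adj a b₂)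
    (ha₃ : G.Adj a b₃) (hc₁ : G.Adj c b₁) (hc₂ : G.Adj c b₂) (hc₃ : G.Adj c b₃) :
    ¬ (Odd (forwardCount o (Walk.square ha₁ hc₁.symm hc₂ ha₂.symm)) ∧
      Odd (forwardCount o (Walk.square ha₂ hc₂.symm hc₃ ha₃.symm)) ∧
      Odd (forwardCount o (Walk.square ha₁ hc₁.symm hc₃ ha₃.symm))) := by
  simp only [← ZMod.natCast_eq_one_iff_odd, cast_forwardCount_square]
  generalize o.parity a b₁ + o.parity c b₁ = x₁
  generalize o.parity a b₂ + o.parity c b₂ = x₂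
  generalize o.parity a b₃ + o.parity c b₃ = x₃
  revert x₁ x₂ x₃
  decide

theorem hasPMOn_compl_square_completeBipartiteGraph_fin_three {i i' j j' : Fin 3}
    (hi : i ≠ i') (hj : j ≠ j') :
    HasPMOn (completeBipartiteGraph (Fin 3) (Fin 3))
      ({.inl i, .inr j, .inl i', .inr j'} : Set (Fin 3 ⊕ Fin 3))ᶜ := by
  have third : ∀ k k' : Fin 3, k ≠ k' → ∃ k'', ∀ x, x ≠ k ∧ x ≠ k' ↔ x = k'' := by decide
  obtain ⟨i'', hi''⟩ := third i i' hi
  obtain ⟨j'', hj''⟩ := third j j' hj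
  have hadj : (completeBipartiteGraph (Fin 3) (Fin 3)).Adj (.inl i'') (.inr j'') := by simp
  refine ⟨_, Subgraph.IsMatching.subgraphOfAdj hadj, ?_⟩
  ext (x | x)
  · simpa [eq_comm] using (hi'' x).symm
  · simpa [eq_comm] using (hj'' x).symm

/-- `K₃,₃` does not admit a Pfaffian orientation. -/
theorem K33_not_pfaffian :
    ¬ ∃ o : GraphOrientation (completeBipartiteGraph (Fin 3) (Fin 3)),
        IsPfaffian (completeBipartiteGraph (Fin 3) (Fin 3)) o := by
  rintro ⟨o, hpf⟩
  have hadj : ∀ i j : Fin 3, (completeBipartiteGraph (Fin 3) (Fin 3)).Adj (.inl i) (.inr j) := by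
    simp
  have hodd {j j' : Fin 3} (hj : j ≠ j') :=
    hpf.odd_forwardCount_square (hadj 0 j) (hadj 1 j).symm (hadj 1 j') (hadj 0 j').symm
      (by simp) (by simpa using hj)
      (hasPMOn_compl_square_completeBipartiteGraph_fin_three (by decide) hj)
  exact o.not_odd_forwardCount_squares (hadj 0 0) (hadj 0 1) (hadj 0 2) (hadj 1 0) (hadj 1 1)
    (hadj 1 2) ⟨hodd (by decide), hodd (by decide), hodd (by decide)⟩
end
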